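/- arXiv:2602.18179 — 6 statements merged into one kernel-verified Lean document; each statement's English description precedes it below -/
import Mathlib

section
/- Let X be a compact metric space, E a real normed vector space, M ⊆ E a compact subset, U ⊆ E an open set with M ⊆ U, and π : U → M a Lipschitz retraction, i.e., π is Lipschitz and π(p) = p for every p ∈ M. Then for every continuous map f : X → M and every ε > 0 there exists a Lipschitz map g : X → M such that sup_{x ∈ X} ‖f(x) − g(x)‖ < ε. -/
/-!
Since `X` is compact, `f` is uniformly continuous. Averaging the values of `f` at the points
`i` of a finite `r`-net with the tent weights `max (r - dist x i) 0` gives a map uniformly close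
to `f`; it is Lipschitz because the normalised average is a `C¹` function of the Lipschitz tent
weights, and a `C¹` map is Lipschitz on the compact set of weights that occur. This map need not
take values in `M`, but it stays in a thickening of `M` contained in `U`, so composing with the
`L`-Lipschitz retraction brings it back into `M` while multiplying the error by at most `L`.
-/

open Set Metric Finset
open scoped NNReal

theorem LipschitzOnWith.comp_lipschitzWith {α β γ : Type*} [PseudoEMetricSpace α]
    [PseudoEMetricSpace β] [PseudoEMetricSpace γ] {g : β → γ} {f : α → β} {t : Set β}
    {Kg Kf : ℝ≥0} (hg : LipschitzOnWith Kg g t) (hf : LipschitzWith Kf f) (hft : ∀ x, f x ∈ t) :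
    LipschitzWith (Kg * Kf) (g ∘ f) :=
  lipschitzOnWith_univ.1 (hg.comp hf.lipschitzOnWith fun x _ => hft x)

theorem Convex.centerMass_mem_of_ne_zero {R E ι : Type*} [Field R] [LinearOrder R]
    [IsStrictOrderedRing R] [AddCommGroup E] [Module R E] {s : Set E} {t : Finset ι}
    {w : ι → R} {z : ι → E} (hs : Convex R s) (h₀ : ∀ i ∈ t, 0 ≤ w i)
    (hpos : 0 < ∑ i ∈ t, w i) (hz : ∀ i ∈ t, w i ≠ 0 → z i ∈ s) : t.centerMass w z ∈ s := by
  classical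
  rw [← centerMass_filter_ne_zero]
  refine hs.centerMass_mem (fun i hi => h₀ i (mem_filter.1 hi).1) ?_ fun i hi => ?_
  · rwa [sum_filter_ne_zero]
  · exact hz i (mem_filter.1 hi).1 (mem_filter.1 hi).2

theorem Finset.contDiffAt_centerMass {𝕜 E ι : Type*} [NontriviallyNormedField 𝕜]
    [NormedAddCommGroup E] [NormedSpace 𝕜 E] [Fintype ι] {n : WithTop ℕ∞} (z : ι → E) {w : ι → 𝕜}
    (hw : ∑ i, w i ≠ 0) : ContDiffAt 𝕜 n (fun w : ι → 𝕜 => univ.centerMass w z) w := by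
  unfold centerMass
  exact (contDiffAt_inv 𝕜 hw).comp _ (by fun_prop) |>.smul (by fun_prop)

theorem LipschitzWith.exists_lipschitzWith_comp_of_contDiffAt {𝕜 X F E : Type*} [RCLike 𝕜]
    [PseudoMetricSpace X] [CompactSpace X] [NormedAddCommGroup F] [NormedSpace 𝕜 F]
    [NormedAddCommGroup E] [NormedSpace 𝕜 E] {Ψ : X → F} {K : ℝ≥0} (hΨ : LipschitzWith K Ψ)
    {G : F → E} (hG : ∀ x, ContDiffAt 𝕜 1 G (Ψ x)) : ∃ K', LipschitzWith K' (G ∘ Ψ) := by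
  have hloc : LocallyLipschitzOn (range Ψ) G := by
    rintro _ ⟨x, rfl⟩
    obtain ⟨K, t, ht, hGt⟩ := (hG x).exists_lipschitzOnWith
    exact ⟨K, t, mem_nhdsWithin_of_mem_nhds ht, hGt⟩
  obtain ⟨K', hK'⟩ := hloc.exists_lipschitzOnWith_of_compact (isCompact_range hΨ.continuous)
  exact ⟨K' * K, hK'.comp_lipschitzWith hΨ mem_range_self⟩

theorem exists_lipschitzWith_centerMass {X E ι : Type*} [PseudoMetricSpace X] [CompactSpace X]
    [NormedAddCommGroup E] [NormedSpace ℝ E] [Fintype ι] {w : X → ι → ℝ} {K : ℝ≥0}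
    (hw : LipschitzWith K w) (hsum : ∀ x, ∑ i, w x i ≠ 0) (z : ι → E) :
    ∃ K', LipschitzWith K' fun x => univ.centerMass (w x) z :=
  hw.exists_lipschitzWith_comp_of_contDiffAt fun x => contDiffAt_centerMass z (hsum x)

theorem Continuous.exists_lipschitzWith_forall_dist_lt {X E : Type*} [PseudoMetricSpace X]
    [CompactSpace X] [NormedAddCommGroup E] [NormedSpace ℝ E] {f : X → E} (hf : Continuous f)
    {c : ℝ} (hc : 0 < c) : ∃ g : X → E, (∃ K, LipschitzWith K g) ∧ ∀ x, dist (f x) (g x) < c := by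
  obtain ⟨r, hr, hfr⟩ := Metric.uniformContinuous_iff.1
    (CompactSpace.uniformContinuous_of_continuous hf) c hc
  obtain ⟨t, -, hcover⟩ := (isCompact_univ (X := X)).elim_nhds_subcover (fun x => ball x r)
    fun x _ => ball_mem_nhds x hr
  let tent : X → t → ℝ := fun x i => max (r - dist x i) 0
  have htent : LipschitzWith 1 tent := by
    refine LipschitzWith.of_dist_le_mul fun x y => (dist_pi_le_iff (by positivity)).2 fun i => ?_
    have : LipschitzWith 1 fun x : X => max (r - dist x i) 0 :=
      (LipschitzWith.of_le_add (f := fun x : X => r - dist x i) fun x y => by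
        linarith [dist_triangle_left y i x]).max_const 0
    simpa using this.dist_le_mul x y
  have htent_pos : ∀ x, 0 < ∑ i, tent x i := by
    intro x
    obtain ⟨i, hi, hxi⟩ := mem_iUnion₂.1 (hcover (mem_univ x))
    exact sum_pos' (fun i _ => le_max_right _ _)
      ⟨⟨i, hi⟩, mem_univ _, lt_max_of_lt_left (sub_pos.2 (mem_ball.1 hxi))⟩
  refine ⟨fun x => univ.centerMass (tent x) fun i => f i,
    exists_lipschitzWith_centerMass htent (fun x => (htent_pos x).ne') _, fun x => ?_⟩
  rw [dist_comm, ← mem_ball]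
  refine (convex_ball (f x) c).centerMass_mem_of_ne_zero (fun i _ => le_max_right _ _)
    (htent_pos x) fun i _ hi => ?_
  rw [mem_ball, dist_comm]
  refine hfr (not_le.1 fun hle => hi (max_eq_right ?_))
  linarith

/-- Let `X` be a compact metric space, `E` a real normed vector space,
`M ⊆ E` compact, `U ⊆ E` open with `M ⊆ U`, and `retr : U → M` a Lipschitz retraction.
Then every continuous map `f : X → M` can be approximated, in the uniform distance,
by Lipschitz maps `g : X → M`. -/
theorem lipschitz_approx_into_retract
    {X : Type*} [MetricSpace X] [CompactSpace X]
    {E : Type*} [NormedAddCommGroup E] [NormedSpace ℝ E]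
    (M U : Set E) (hM : IsCompact M) (hU : IsOpen U) (hMU : M ⊆ U)
    (retr : E → E) (L : NNReal) (hretrLip : LipschitzOnWith L retr U)
    (hretrM : ∀ u ∈ U, retr u ∈ M) (hretr : ∀ p ∈ M, retr p = p)
    (f : X → E) (hf : Continuous f) (hfM : ∀ x, f x ∈ M)
    (ε : ℝ) (hε : 0 < ε) :
    ∃ g : X → E, (∃ K : NNReal, LipschitzWith K g) ∧ (∀ x, g x ∈ M) ∧
      (⨆ x : X, ‖f x - g x‖) < ε := by
  obtain ⟨δ, hδ, hδU⟩ := hM.exists_thickening_subset_open hU hMU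
  set c := min δ (ε / (2 * (L + 1)))
  obtain ⟨g, ⟨K, hg⟩, hfg⟩ := hf.exists_lipschitzWith_forall_dist_lt (c := c) (by positivity)
  have hgU : ∀ x, g x ∈ U := fun x => hδU <| mem_thickening_iff.2
    ⟨f x, hfM x, by rw [dist_comm]; exact (hfg x).trans_le (min_le_left _ _)⟩
  have hclose : ∀ x, ‖f x - retr (g x)‖ ≤ ε / 2 := fun x => calc
    ‖f x - retr (g x)‖ = dist (retr (f x)) (retr (g x)) := by rw [hretr _ (hfM x), dist_eq_norm]
    _ ≤ L * dist (f x) (g x) := hretrLip.dist_le_mul _ (hMU (hfM x)) _ (hgU x)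
    _ ≤ (L + 1) * (ε / (2 * (L + 1))) := by
      gcongr
      · linarith
      · exact (hfg x).le.trans (min_le_right _ _)
    _ = ε / 2 := by field_simp
  refine ⟨retr ∘ g, ⟨L * K, hretrLip.comp_lipschitzWith hg hgU⟩, fun x => hretrM _ (hgU x), ?_⟩
  exact (Real.iSup_le hclose (by positivity)).trans_lt (half_lt_self hε)
end

section
/- Let E be a real normed vector space, M ⊆ E a compact subset, U ⊆ E an open set with M ⊆ U, and π : U → M a Lipschitz retraction, i.e., π is Lipschitz and π(p) = p for every p ∈ M. Then there exists δ > 0 with the following property: for every metric space X and all Lipschitz maps f, g : X → M with sup_{x ∈ X} ‖f(x) − g(x)‖ < δ, there exists a Lipschitz map H : [0,1] × X → M (Lipschitz with respect to the maximum metric on [0,1] × X) such that H(0, x) = f(x) and H(1, x) = g(x) for all x ∈ X. -/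
universe u

/-- Let `E` be a real normed vector space, `M ⊆ E` compact, `U ⊆ E`
open with `M ⊆ U`, and `retr : U → M` a Lipschitz retraction. Then there exists `δ > 0`
such that for every metric space `X` and all Lipschitz maps `f, g : X → M` with uniform
distance `< δ`, there is a Lipschitz homotopy `H : [0,1] × X → M` (with respect to the
maximum metric on the product) from `f` to `g`. -/
theorem close_lipschitz_maps_into_retract_lipschitz_homotopic
    {E : Type*} [NormedAddCommGroup E] [NormedSpace ℝ E]
    (M U : Set E) (hM : IsCompact M) (hU : IsOpen U) (hMU : M ⊆ U)
    (retr : E → E) (L : NNReal) (hretrLip : LipschitzOnWith L retr U)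
    (hretrM : ∀ u ∈ U, retr u ∈ M) (hretr : ∀ p ∈ M, retr p = p) :
    ∃ δ : ℝ, 0 < δ ∧ ∀ (X : Type u) [MetricSpace X] (f g : X → E),
      (∃ K : NNReal, LipschitzWith K f) → (∃ K : NNReal, LipschitzWith K g) →
      (∀ x, f x ∈ M) → (∀ x, g x ∈ M) →
      (⨆ x : X, ‖f x - g x‖) < δ →
      ∃ H : unitInterval × X → E, (∃ K : NNReal, LipschitzWith K H) ∧
        (∀ p, H p ∈ M) ∧ (∀ x, H (0, x) = f x) ∧ (∀ x, H (1, x) = g x) := by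
  obtain ⟨δ, hδ, hth⟩ := hM.exists_thickening_subset_open hU hMU
  refine ⟨δ, hδ, ?_⟩
  intro X _ f g hfl hgl hfM hgM hsup
  obtain ⟨Kf, hf⟩ := hfl
  obtain ⟨Kg, hg⟩ := hgl
  obtain ⟨R, hR⟩ := hM.isBounded.subset_closedBall 0
  have hbdd : BddAbove (Set.range fun x => ‖f x - g x‖) := by
    refine ⟨R + R, ?_⟩
    rintro r ⟨x, rfl⟩
    have h1 : ‖f x‖ ≤ R := by
      simpa [dist_eq_norm] using hR (hfM x)
    have h2 : ‖g x‖ ≤ R := by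
      simpa [dist_eq_norm] using hR (hgM x)
    calc ‖f x - g x‖ ≤ ‖f x‖ + ‖g x‖ := norm_sub_le _ _
      _ ≤ R + R := add_le_add h1 h2
  have hpt : ∀ x, ‖f x - g x‖ < δ := fun x =>
    lt_of_le_of_lt (le_ciSup hbdd x) hsup
  set φ : unitInterval × X → E := fun p => f p.2 + (p.1 : ℝ) • (g p.2 - f p.2) with hφdef
  have hφU : ∀ p, φ p ∈ U := by
    intro ⟨t, x⟩
    apply hth
    rw [Metric.mem_thickening_iff]
    refine ⟨f x, hfM x, ?_⟩
    have ht0 : (0:ℝ) ≤ (t:ℝ) := t.2.1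
    have ht1 : (t:ℝ) ≤ 1 := t.2.2
    have : dist (φ (t, x)) (f x) = ‖(t:ℝ) • (g x - f x)‖ := by
      simp [hφdef, dist_eq_norm]
    rw [this, norm_smul]
    calc |(t:ℝ)| * ‖g x - f x‖ ≤ 1 * ‖g x - f x‖ := by
          apply mul_le_mul_of_nonneg_right _ (norm_nonneg _)
          rw [abs_of_nonneg ht0]; exact ht1
      _ = ‖g x - f x‖ := one_mul _
      _ = ‖f x - g x‖ := by rw [norm_sub_rev]
      _ < δ := hpt x
  have hφLip : LipschitzWith (Kf + (Kf + Kg) + δ.toNNReal) φ := by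
    apply LipschitzWith.of_dist_le_mul
    rintro ⟨t, x⟩ ⟨s, y⟩
    have hdx : dist x y ≤ dist ((t, x) : unitInterval × X) (s, y) := le_max_right _ _
    have hdt : dist t s ≤ dist ((t, x) : unitInterval × X) (s, y) := le_max_left _ _
    have hd0 : (0:ℝ) ≤ dist ((t, x) : unitInterval × X) (s, y) := dist_nonneg
    have hts : dist t s = |(t:ℝ) - (s:ℝ)| := by
      rw [Subtype.dist_eq, Real.dist_eq]
    have hfxy : ‖f x - f y‖ ≤ (Kf : ℝ) * dist x y := by
      simpa [dist_eq_norm] using hf.dist_le_mul x y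
    have hgxy : ‖g x - g y‖ ≤ (Kg : ℝ) * dist x y := by
      simpa [dist_eq_norm] using hg.dist_le_mul x y
    have hs0 : (0:ℝ) ≤ (s:ℝ) := s.2.1
    have hs1 : (s:ℝ) ≤ 1 := s.2.2
    have key : φ (t, x) - φ (s, y) =
        (f x - f y) + ((t:ℝ) - (s:ℝ)) • (g x - f x)
          + (s:ℝ) • ((g x - f x) - (g y - f y)) := by
      simp only [hφdef]
      module
    rw [dist_eq_norm, key]
    have hB : ‖((t:ℝ) - (s:ℝ)) • (g x - f x)‖ ≤ dist t s * δ := by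
      rw [norm_smul, Real.norm_eq_abs, ← hts]
      apply mul_le_mul_of_nonneg_left _ dist_nonneg
      rw [norm_sub_rev]
      exact (hpt x).le
    have hC : ‖(s:ℝ) • ((g x - f x) - (g y - f y))‖
        ≤ (Kf:ℝ) * dist x y + (Kg:ℝ) * dist x y := by
      rw [norm_smul, Real.norm_eq_abs, abs_of_nonneg hs0]
      calc (s:ℝ) * ‖(g x - f x) - (g y - f y)‖
          ≤ 1 * ‖(g x - f x) - (g y - f y)‖ :=
            mul_le_mul_of_nonneg_right hs1 (norm_nonneg _)
        _ = ‖(g x - g y) - (f x - f y)‖ := by rw [one_mul]; congr 1; abel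
        _ ≤ ‖g x - g y‖ + ‖f x - f y‖ := norm_sub_le _ _
        _ ≤ (Kg:ℝ) * dist x y + (Kf:ℝ) * dist x y := add_le_add hgxy hfxy
        _ = (Kf:ℝ) * dist x y + (Kg:ℝ) * dist x y := by ring
    calc ‖(f x - f y) + ((t:ℝ) - (s:ℝ)) • (g x - f x)
          + (s:ℝ) • ((g x - f x) - (g y - f y))‖
        ≤ ‖f x - f y‖ + ‖((t:ℝ) - (s:ℝ)) • (g x - f x)‖
            + ‖(s:ℝ) • ((g x - f x) - (g y - f y))‖ := norm_add₃_le
      _ ≤ ((Kf:ℝ) * dist x y + dist t s * δ)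
            + ((Kf:ℝ) * dist x y + (Kg:ℝ) * dist x y) :=
          add_le_add (add_le_add hfxy hB) hC
      _ ≤ ((Kf + (Kf + Kg) + δ.toNNReal : NNReal) : ℝ) *
            dist ((t, x) : unitInterval × X) (s, y) := by
          push_cast
          rw [Real.coe_toNNReal δ hδ.le]
          nlinarith [mul_le_mul_of_nonneg_left hdx Kf.coe_nonneg,
            mul_le_mul_of_nonneg_left hdx Kg.coe_nonneg,
            mul_le_mul_of_nonneg_left hdt hδ.le]
  refine ⟨retr ∘ φ, ⟨L * (Kf + (Kf + Kg) + δ.toNNReal), ?_⟩, ?_, ?_, ?_⟩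
  · rw [← lipschitzOnWith_univ]
    exact hretrLip.comp (lipschitzOnWith_univ.mpr hφLip) (fun p _ => hφU p)
  · exact fun p => hretrM _ (hφU p)
  · intro x
    have h0 : φ (0, x) = f x := by simp [hφdef]
    simp only [Function.comp_apply, h0]
    exact hretr _ (hfM x)
  · intro x
    have h1 : φ (1, x) = g x := by simp [hφdef]
    simp only [Function.comp_apply, h1]
    exact hretr _ (hgM x)
end

section
/- Let n ≥ 1 and let X be a nonempty compact metric space such that every point of X has an open neighborhood that is bi-Lipschitz homeomorphic to an open subset of ℝⁿ. Then there exist R > 0 and λ > 0 such that for every x₀ ∈ X and every 0 < r < R, writing B = B(x₀, r), there exists a Lipschitz map φ : [0,1] × B → X with φ(0, x) = x for all x ∈ B, φ(1, ·) constant, and d(φ(s, x), φ(t, y)) ≤ λ·r·|s − t| + λ·d(x, y) for all s, t ∈ [0,1] and all x, y ∈ B. -/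
open Metric

/-- A ball `B(x₀, r)` admits a uniform Lipschitz contraction with constant `lam`. -/
def GoodBall {X : Type*} [MetricSpace X] (lam : ℝ) (x₀ : X) (r : ℝ) : Prop :=
  ∃ φ : unitInterval × Metric.ball x₀ r → X,
    (∃ K : NNReal, LipschitzWith K φ) ∧
    (∀ y, φ (0, y) = (y : X)) ∧
    (∃ c : X, ∀ y, φ (1, y) = c) ∧
    ∀ (s t : unitInterval) (y z : Metric.ball x₀ r),
      dist (φ (s, y)) (φ (t, z)) ≤ lam * r * |(s : ℝ) - (t : ℝ)| + lam * dist y z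

lemma goodBall_mono {X : Type*} [MetricSpace X] {lam lam' : ℝ} {x₀ : X} {r : ℝ}
    (hr : 0 ≤ r) (hll : lam ≤ lam') (h : GoodBall lam x₀ r) : GoodBall lam' x₀ r := by
  obtain ⟨φ, hK, h0, h1, hest⟩ := h
  refine ⟨φ, hK, h0, h1, fun s t y z => (hest s t y z).trans ?_⟩
  gcongr <;> positivity

lemma local_good {n : ℕ} {X : Type*} [MetricSpace X] (x : X)
    (h : ∃ V : Set X, IsOpen V ∧ x ∈ V ∧
      ∃ O : Set (EuclideanSpace ℝ (Fin n)), IsOpen O ∧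
        ∃ (e : V ≃ O) (L : NNReal), LipschitzWith L (e : V → O) ∧
          LipschitzWith L (e.symm : O → V)) :
    ∃ ρ : ℝ, 0 < ρ ∧ ∃ lam : ℝ, 1 ≤ lam ∧
      ∀ x₀ : X, dist x₀ x < ρ / 2 → ∀ r : ℝ, 0 < r → r ≤ ρ / 2 →
        GoodBall lam x₀ r := by
  obtain ⟨V, hVopen, hxV, O, hOopen, e, L, hLe, hLe'⟩ := h
  set Lr : ℝ := max (L : ℝ) 1 with hLr
  have hLr1 : 1 ≤ Lr := le_max_right _ _
  have hLr0 : 0 < Lr := lt_of_lt_of_le one_pos hLr1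
  -- the bi-Lipschitz bounds with real constant Lr
  have heb : ∀ a b : V, dist ((e a : EuclideanSpace ℝ (Fin n))) (e b : EuclideanSpace ℝ (Fin n))
      ≤ Lr * dist (a : X) (b : X) := by
    intro a b
    have := hLe.dist_le_mul a b
    rw [Subtype.dist_eq, Subtype.dist_eq] at this
    exact this.trans (by gcongr; exact le_max_left _ _)
  have heb' : ∀ a b : O, dist ((e.symm a : X)) ((e.symm b : X))
      ≤ Lr * dist (a : EuclideanSpace ℝ (Fin n)) (b : EuclideanSpace ℝ (Fin n)) := by
    intro a b
    have := hLe'.dist_le_mul a b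
    rw [Subtype.dist_eq, Subtype.dist_eq] at this
    exact this.trans (by gcongr; exact le_max_left _ _)
  -- choose ε and δ
  obtain ⟨ε, hε, hεO⟩ := Metric.isOpen_iff.1 hOopen _ (e ⟨x, hxV⟩).2
  obtain ⟨δ, hδ, hδV⟩ := Metric.isOpen_iff.1 hVopen x hxV
  set c₀ : EuclideanSpace ℝ (Fin n) := (e ⟨x, hxV⟩ : EuclideanSpace ℝ (Fin n)) with hc₀
  set ρ : ℝ := min δ (ε / (2 * Lr)) with hρdef
  have hρ : 0 < ρ := lt_min hδ (by positivity)
  refine ⟨ρ, hρ, Lr ^ 2, one_le_pow₀ hLr1, ?_⟩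
  intro x₀ hx₀ r hr hrρ
  have hballV : Metric.ball x₀ r ⊆ V := by
    intro y hy
    apply hδV
    have : dist y x < ρ := by
      calc dist y x ≤ dist y x₀ + dist x₀ x := dist_triangle _ _ _
        _ < r + ρ / 2 := by exact add_lt_add_of_lt_of_lt (mem_ball.1 hy) hx₀
        _ ≤ ρ / 2 + ρ / 2 := by linarith
        _ = ρ := by ring
    exact mem_ball.2 (this.trans_le (min_le_left _ _))
  have hρδ : ρ ≤ δ := min_le_left _ _
  have hx₀V : x₀ ∈ V := hδV (mem_ball.2 (by linarith))
  set c : EuclideanSpace ℝ (Fin n) := (e ⟨x₀, hx₀V⟩ : EuclideanSpace ℝ (Fin n)) with hc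
  -- all relevant e-images lie in closedBall c₀ (ε/2)
  have himg : ∀ y : Metric.ball x₀ r,
      dist ((e ⟨y.1, hballV y.2⟩ : EuclideanSpace ℝ (Fin n))) c₀ ≤ ε / 2 := by
    intro y
    have hdy : dist (y : X) x ≤ ρ := by
      calc dist (y : X) x ≤ dist (y : X) x₀ + dist x₀ x := dist_triangle _ _ _
        _ ≤ r + ρ / 2 := add_le_add (mem_ball.1 y.2).le hx₀.le
        _ ≤ ρ := by linarith
    calc dist ((e ⟨y.1, hballV y.2⟩ : EuclideanSpace ℝ (Fin n))) c₀
        ≤ Lr * dist (y : X) x := heb _ _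
      _ ≤ Lr * ρ := by gcongr
      _ ≤ Lr * (ε / (2 * Lr)) := by gcongr; exact min_le_right _ _
      _ = ε / 2 := by field_simp
  have himgc : dist c c₀ ≤ ε / 2 := by
    calc dist c c₀ ≤ Lr * dist x₀ x := heb _ _
      _ ≤ Lr * (ε / (2 * Lr)) := by
          gcongr
          exact hx₀.le.trans (by linarith [min_le_right δ (ε / (2 * Lr))])
      _ = ε / 2 := by field_simp
  -- segment points lie in O
  have hseg : ∀ (s : unitInterval) (y : Metric.ball x₀ r),
      (1 - (s : ℝ)) • ((e ⟨y.1, hballV y.2⟩ : EuclideanSpace ℝ (Fin n))) + (s : ℝ) • c ∈ O := by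
    intro s y
    apply hεO
    rw [mem_ball]
    set a : EuclideanSpace ℝ (Fin n) := (e ⟨y.1, hballV y.2⟩ : EuclideanSpace ℝ (Fin n))
    have hs0 : (0 : ℝ) ≤ s := s.2.1
    have hs1 : (s : ℝ) ≤ 1 := s.2.2
    have key : (1 - (s : ℝ)) • a + (s : ℝ) • c - c₀
        = (1 - (s : ℝ)) • (a - c₀) + (s : ℝ) • (c - c₀) := by module
    calc dist ((1 - (s : ℝ)) • a + (s : ℝ) • c) c₀
        = ‖(1 - (s : ℝ)) • (a - c₀) + (s : ℝ) • (c - c₀)‖ := by rw [dist_eq_norm, key]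
      _ ≤ ‖(1 - (s : ℝ)) • (a - c₀)‖ + ‖(s : ℝ) • (c - c₀)‖ := norm_add_le _ _
      _ = (1 - (s : ℝ)) * ‖a - c₀‖ + (s : ℝ) * ‖c - c₀‖ := by
          rw [norm_smul, norm_smul, Real.norm_eq_abs, Real.norm_eq_abs,
            abs_of_nonneg (by linarith), abs_of_nonneg hs0]
      _ ≤ (1 - (s : ℝ)) * (ε / 2) + (s : ℝ) * (ε / 2) := by
          have h1 := himg y
          have h2 := himgc
          rw [dist_eq_norm] at h1 h2
          gcongr <;> linarith
      _ = ε / 2 := by ring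
      _ < ε := by linarith
  -- define φ
  set φ : unitInterval × Metric.ball x₀ r → X := fun q =>
    ((e.symm ⟨(1 - (q.1 : ℝ)) • ((e ⟨q.2.1, hballV q.2.2⟩ : EuclideanSpace ℝ (Fin n)))
        + (q.1 : ℝ) • c, hseg q.1 q.2⟩ : V) : X) with hφ
  -- key distance estimate
  have hest : ∀ (s t : unitInterval) (y z : Metric.ball x₀ r),
      dist (φ (s, y)) (φ (t, z)) ≤ Lr ^ 2 * r * |(s : ℝ) - (t : ℝ)| + Lr ^ 2 * dist y z := by
    intro s t y z
    set a : EuclideanSpace ℝ (Fin n) := (e ⟨y.1, hballV y.2⟩ : EuclideanSpace ℝ (Fin n))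
    set b : EuclideanSpace ℝ (Fin n) := (e ⟨z.1, hballV z.2⟩ : EuclideanSpace ℝ (Fin n))
    have hs0 : (0 : ℝ) ≤ s := s.2.1
    have hs1 : (s : ℝ) ≤ 1 := s.2.2
    have step1 : dist (φ (s, y)) (φ (t, z))
        ≤ Lr * dist ((1 - (s : ℝ)) • a + (s : ℝ) • c) ((1 - (t : ℝ)) • b + (t : ℝ) • c) :=
      heb' _ _
    have key : ((1 - (s : ℝ)) • a + (s : ℝ) • c) - ((1 - (t : ℝ)) • b + (t : ℝ) • c)
        = (1 - (s : ℝ)) • (a - b) + ((s : ℝ) - (t : ℝ)) • (c - b) := by module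
    have hab : ‖a - b‖ ≤ Lr * dist (y : X) (z : X) := by
      rw [← dist_eq_norm]; exact heb _ _
    have hcb : ‖c - b‖ ≤ Lr * r := by
      rw [← dist_eq_norm]
      calc dist c b ≤ Lr * dist x₀ (z : X) := heb _ _
        _ ≤ Lr * r := by
            gcongr
            rw [dist_comm]
            exact (mem_ball.1 z.2).le
    have step2 : dist ((1 - (s : ℝ)) • a + (s : ℝ) • c) ((1 - (t : ℝ)) • b + (t : ℝ) • c)
        ≤ Lr * dist (y : X) (z : X) + |(s : ℝ) - (t : ℝ)| * (Lr * r) := by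
      rw [dist_eq_norm, key]
      calc ‖(1 - (s : ℝ)) • (a - b) + ((s : ℝ) - (t : ℝ)) • (c - b)‖
          ≤ ‖(1 - (s : ℝ)) • (a - b)‖ + ‖((s : ℝ) - (t : ℝ)) • (c - b)‖ := norm_add_le _ _
        _ = (1 - (s : ℝ)) * ‖a - b‖ + |(s : ℝ) - (t : ℝ)| * ‖c - b‖ := by
            rw [norm_smul, norm_smul, Real.norm_eq_abs, Real.norm_eq_abs,
              abs_of_nonneg (by linarith)]
        _ ≤ 1 * (Lr * dist (y : X) (z : X)) + |(s : ℝ) - (t : ℝ)| * (Lr * r) := by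
            have h1 : (1 - (s : ℝ)) * ‖a - b‖ ≤ 1 * (Lr * dist (y : X) (z : X)) :=
              mul_le_mul (by linarith) hab (norm_nonneg _) one_pos.le
            have h2 : |(s : ℝ) - (t : ℝ)| * ‖c - b‖ ≤ |(s : ℝ) - (t : ℝ)| * (Lr * r) :=
              mul_le_mul_of_nonneg_left hcb (abs_nonneg _)
            linarith
        _ = Lr * dist (y : X) (z : X) + |(s : ℝ) - (t : ℝ)| * (Lr * r) := by ring
    calc dist (φ (s, y)) (φ (t, z))
        ≤ Lr * (Lr * dist (y : X) (z : X) + |(s : ℝ) - (t : ℝ)| * (Lr * r)) :=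
          step1.trans (mul_le_mul_of_nonneg_left step2 hLr0.le)
      _ = Lr ^ 2 * r * |(s : ℝ) - (t : ℝ)| + Lr ^ 2 * dist (y : X) (z : X) := by ring
      _ = Lr ^ 2 * r * |(s : ℝ) - (t : ℝ)| + Lr ^ 2 * dist y z := by
          rw [Subtype.dist_eq]
  refine ⟨φ, ?_, ?_, ?_, hest⟩
  · -- Lipschitz
    refine ⟨(Lr ^ 2 * (r + 1)).toNNReal, LipschitzWith.of_dist_le_mul fun p q => ?_⟩
    have h1 : dist p.1 q.1 ≤ dist p q := by rw [Prod.dist_eq]; exact le_max_left _ _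
    have h2 : dist p.2 q.2 ≤ dist p q := by rw [Prod.dist_eq]; exact le_max_right _ _
    have hst : |(p.1 : ℝ) - (q.1 : ℝ)| = dist p.1 q.1 := by
      rw [Subtype.dist_eq, Real.dist_eq]
    have := hest p.1 q.1 p.2 q.2
    have hd0 : 0 ≤ dist p q := dist_nonneg
    rw [Real.coe_toNNReal _ (by positivity)]
    have hLr2 : (0:ℝ) ≤ Lr ^ 2 := by positivity
    calc dist (φ p) (φ q) = dist (φ (p.1, p.2)) (φ (q.1, q.2)) := by rw [Prod.mk.eta, Prod.mk.eta]
      _ ≤ Lr ^ 2 * r * |(p.1 : ℝ) - (q.1 : ℝ)| + Lr ^ 2 * dist p.2 q.2 := hest _ _ _ _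
      _ ≤ Lr ^ 2 * r * dist p q + Lr ^ 2 * dist p q := by
          rw [hst]
          gcongr <;> assumption
      _ = Lr ^ 2 * (r + 1) * dist p q := by ring
  · -- φ(0, y) = y
    intro y
    have hval : (1 - ((0 : unitInterval) : ℝ)) • ((e ⟨y.1, hballV y.2⟩ : EuclideanSpace ℝ (Fin n)))
        + ((0 : unitInterval) : ℝ) • c = (e ⟨y.1, hballV y.2⟩ : EuclideanSpace ℝ (Fin n)) := by
      simp
    have : (⟨_, hseg 0 y⟩ : O) = e ⟨y.1, hballV y.2⟩ := Subtype.ext hval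
    simp only [hφ]
    rw [this, Equiv.symm_apply_apply]
  · -- φ(1, y) = x₀
    refine ⟨x₀, fun y => ?_⟩
    have hval : (1 - ((1 : unitInterval) : ℝ)) • ((e ⟨y.1, hballV y.2⟩ : EuclideanSpace ℝ (Fin n)))
        + ((1 : unitInterval) : ℝ) • c = c := by simp
    have : (⟨_, hseg 1 y⟩ : O) = e ⟨x₀, hx₀V⟩ := Subtype.ext hval
    simp only [hφ]
    rw [this, Equiv.symm_apply_apply]


/-- Let `n ≥ 1` and let `X` be a nonempty compact metric space in which
every point has an open neighborhood bi-Lipschitz homeomorphic to an open subset of `ℝⁿ`.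
Then there exist `R > 0` and `λ > 0` such that every open ball `B = B(x₀, r)` with
`0 < r < R` admits a Lipschitz contraction `φ : [0,1] × B → X` with `φ(0, x) = x`,
`φ(1, ·)` constant, and `d(φ(s,x), φ(t,y)) ≤ λ r |s - t| + λ d(x, y)`. -/
theorem uniform_lipschitz_contractibility_of_locally_biLipschitz_euclidean
    (n : ℕ) (hn : 1 ≤ n) {X : Type*} [MetricSpace X] [CompactSpace X] [Nonempty X]
    (hloc : ∀ x : X, ∃ V : Set X, IsOpen V ∧ x ∈ V ∧
      ∃ O : Set (EuclideanSpace ℝ (Fin n)), IsOpen O ∧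
        ∃ (e : V ≃ O) (L : NNReal), LipschitzWith L (e : V → O) ∧
          LipschitzWith L (e.symm : O → V)) :
    ∃ R : ℝ, 0 < R ∧ ∃ lam : ℝ, 0 < lam ∧ ∀ (x₀ : X) (r : ℝ), 0 < r → r < R →
      ∃ φ : unitInterval × Metric.ball x₀ r → X,
        (∃ K : NNReal, LipschitzWith K φ) ∧
        (∀ y, φ (0, y) = (y : X)) ∧
        (∃ c : X, ∀ y, φ (1, y) = c) ∧
        ∀ (s t : unitInterval) (y z : Metric.ball x₀ r),
          dist (φ (s, y)) (φ (t, z)) ≤ lam * r * |(s : ℝ) - (t : ℝ)| + lam * dist y z := by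
  choose ρ hρ lam hlam hgood using fun x => local_good (n := n) x (hloc x)
  have hcover : (Set.univ : Set X) ⊆ ⋃ x : X, Metric.ball x (ρ x / 2) := by
    intro x _
    exact Set.mem_iUnion.2 ⟨x, mem_ball_self (by linarith [hρ x])⟩
  obtain ⟨t, ht⟩ := isCompact_univ.elim_finite_subcover _
    (fun x => Metric.isOpen_ball) hcover
  have htne : t.Nonempty := by
    obtain ⟨x⟩ := ‹Nonempty X›
    obtain ⟨i, hi, _⟩ := Set.mem_iUnion₂.1 (ht (Set.mem_univ x))
    exact ⟨i, hi⟩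
  refine ⟨t.inf' htne (fun i => ρ i / 2), ?_, t.sup' htne lam, ?_, ?_⟩
  · rw [Finset.lt_inf'_iff]
    intro i _
    linarith [hρ i]
  · obtain ⟨i, hi⟩ := htne
    have := Finset.le_sup' lam hi
    linarith [hlam i]
  · intro x₀ r hr hrR
    obtain ⟨i, hi, hx₀i⟩ := Set.mem_iUnion₂.1 (ht (Set.mem_univ x₀))
    have hle : (t.inf' htne fun i => ρ i / 2) ≤ ρ i / 2 := Finset.inf'_le _ hi
    have := hgood i x₀ (mem_ball.1 hx₀i) r hr (hrR.le.trans hle)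
    exact goodBall_mono hr.le (Finset.le_sup' lam hi) this
end

section
/- Let X and Y be compact metric spaces, each containing at least two points, and let f : X → Y be a homeomorphism. Suppose f is η-quasisymmetric for some homeomorphism η : [0, ∞) → [0, ∞), i.e., for all x, y, z ∈ X and all t ≥ 0, d(x, y) ≤ t·d(x, z) implies d(f(x), f(y)) ≤ η(t)·d(f(x), f(z)). If Y is linearly locally contractible with some constant λ ≥ 1, then X is linearly locally contractible with some constant λ' ≥ 1. -/
/-!
Pick `x₁ ∈ B(z, r)` almost as far from `z` as any point of the ball and put
`D = d(f z, f x₁)`. Quasisymmetry at the scale `2` gives `f(B(z, r)) ⊆ B(f z, ρ)` with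
`ρ = (η 2 + 1) D`, and at a small scale `v` it gives `f⁻¹ B(f z, λρ) ⊆ B(z, r / v)` as soon as
`η v · λ (η 2 + 1) < 1`. Comparing `x₁` with a point at distance `≥ diam X / 4` from `z`
shows `λρ < diam Y` when `r < diam X / (1 + 4 / v)`, so the contraction of `B(f z, ρ)` inside
`B(f z, λρ)` exists and pulls back along `f` to one of `B(z, r)` inside `B(z, (1 + 4 / v) r)`.
-/

open Metric Set
open scoped NNReal

/-- A metric space `Z` is linearly locally contractible with constant `lam ≥ 1` if every
open ball `B(z, r)` with `0 < r < diam(Z)/lam` is contractible inside `B(z, lam·r)`: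
there is a homotopy, taking values in `B(z, lam·r)`, from the inclusion of `B(z, r)` to
a constant map. -/
def LinLocContractible (Z : Type*) [MetricSpace Z] (lam : ℝ) : Prop :=
  ∀ (z : Z) (r : ℝ), 0 < r → r < Metric.diam (Set.univ : Set Z) / lam →
    ∃ H : unitInterval × Metric.ball z r → Z, Continuous H ∧
      (∀ p, H p ∈ Metric.ball z (lam * r)) ∧
      (∀ y, H (0, y) = (y : Z)) ∧ ∃ c : Z, ∀ y, H (1, y) = c

lemma homeomorph_nnreal_apply_zero (η : ℝ≥0 ≃ₜ ℝ≥0) : η 0 = 0 := by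
  rcases Continuous.strictMono_of_inj η.continuous η.injective with hmono | hanti
  · obtain ⟨a, ha⟩ := η.surjective 0
    have := hmono.monotone (zero_le (a := a))
    rwa [ha, nonpos_iff_eq_zero] at this
  · obtain ⟨b, hb⟩ := η.surjective (η 0 + 1)
    have := hanti.antitone (zero_le (a := b))
    rw [hb] at this
    simp at this

lemma homeomorph_nnreal_exists_pos_apply_mul_lt_one (η : ℝ≥0 ≃ₜ ℝ≥0) {c : ℝ} (hc : 0 < c) :
    ∃ v : ℝ≥0, 0 < v ∧ (η v : ℝ) * c < 1 := by
  have hε : 0 < (c⁻¹ / 2).toNNReal := Real.toNNReal_pos.2 (by positivity)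
  refine ⟨η.symm (c⁻¹ / 2).toNNReal, pos_iff_ne_zero.2 fun h => hε.ne' ?_, ?_⟩
  · rw [← η.apply_symm_apply (c⁻¹ / 2).toNNReal, h, homeomorph_nnreal_apply_zero]
  · rw [η.apply_symm_apply, Real.coe_toNNReal _ (by positivity)]
    field_simp
    norm_num

section PseudoMetric

variable {X : Type*} [PseudoMetricSpace X]

lemma exists_mem_diam_div_four_le_dist {s : Set X} {z : X} (hz : z ∈ s) :
    ∃ x ∈ s, diam s / 4 ≤ dist z x := by
  by_contra! h
  have hdiam : diam s ≤ diam s / 2 :=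
    diam_le_of_forall_dist_le (by linarith [diam_nonneg (s := s)]) fun x hx y hy =>
      (dist_triangle_left x y z).trans (by linarith [h x hx, h y hy])
  linarith [h z hz, dist_self z]

lemma exists_mem_forall_dist_le_two_mul {s : Set X} (hs : Bornology.IsBounded s)
    (hne : s.Nonempty) (z : X) : ∃ y ∈ s, ∀ x ∈ s, dist z x ≤ 2 * dist z y := by
  obtain ⟨R, hR⟩ := hs.subset_closedBall z
  have hbdd : BddAbove (dist z '' s) := ⟨R, by
    rintro _ ⟨x, hx, rfl⟩
    simpa [dist_comm] using hR hx⟩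
  have hle : ∀ x ∈ s, dist z x ≤ sSup (dist z '' s) := fun x hx => le_csSup hbdd ⟨x, hx, rfl⟩
  by_cases hM : sSup (dist z '' s) ≤ 0
  · obtain ⟨y, hy⟩ := hne
    exact ⟨y, hy, fun x hx => (hle x hx).trans (hM.trans (by positivity))⟩
  · obtain ⟨_, ⟨y, hy, rfl⟩, hlt⟩ :=
      exists_lt_of_lt_csSup (hne.image _) (half_lt_self (not_le.1 hM))
    exact ⟨y, hy, fun x hx => by linarith [hle x hx]⟩

end PseudoMetric

section ContractibleIn

variable {Z W : Type*} [TopologicalSpace Z] [TopologicalSpace W]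

def IsContractibleIn (U V : Set Z) : Prop :=
  ∃ H : unitInterval × U → Z, Continuous H ∧ (∀ p, H p ∈ V) ∧ (∀ y, H (0, y) = (y : Z)) ∧
    ∃ c : Z, ∀ y, H (1, y) = c

lemma isContractibleIn_of_subset_singleton {U V : Set Z} {c : Z} (hU : U ⊆ {c}) (hc : c ∈ V) :
    IsContractibleIn U V :=
  ⟨fun _ => c, continuous_const, fun _ => hc, fun y => (hU y.2).symm, c, fun _ => rfl⟩

lemma IsContractibleIn.mono {U U' V V' : Set Z} (h : IsContractibleIn U V) (hU : U' ⊆ U)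
    (hV : V ⊆ V') : IsContractibleIn U' V' := by
  obtain ⟨H, hcont, hmem, h0, c, h1⟩ := h
  exact ⟨fun p => H (p.1, inclusion hU p.2),
    hcont.comp (continuous_fst.prodMk ((continuous_inclusion hU).comp continuous_snd)),
    fun _ => hV (hmem _), fun _ => h0 _, c, fun _ => h1 _⟩

lemma IsContractibleIn.preimage {U V : Set Z} (h : IsContractibleIn U V) (f : W ≃ₜ Z) :
    IsContractibleIn (f ⁻¹' U) (f ⁻¹' V) := by
  obtain ⟨H, hcont, hmem, h0, c, h1⟩ := h
  refine ⟨fun p => f.symm (H (p.1, ⟨f p.2, p.2.2⟩)), ?_, fun p => ?_, fun y => ?_, f.symm c,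
    fun y => ?_⟩
  · exact f.symm.continuous.comp <| hcont.comp <| continuous_fst.prodMk <|
      (f.continuous.comp (continuous_subtype_val.comp continuous_snd)).subtype_mk _
  · simpa using hmem _
  · simp [h0]
  · simp [h1]

lemma linLocContractible_iff {Z : Type*} [MetricSpace Z] {lam : ℝ} :
    LinLocContractible Z lam ↔ ∀ (z : Z) (r : ℝ), 0 < r → r < diam (univ : Set Z) / lam →
      IsContractibleIn (ball z r) (ball z (lam * r)) :=
  Iff.rfl

end ContractibleIn

def QuasisymmetricWith {X Y : Type*} [PseudoMetricSpace X] [PseudoMetricSpace Y]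
    (η : ℝ≥0 → ℝ≥0) (f : X → Y) : Prop :=
  ∀ (x y z : X) (t : ℝ≥0), nndist x y ≤ t * nndist x z →
    nndist (f x) (f y) ≤ η t * nndist (f x) (f z)

namespace QuasisymmetricWith

variable {X Y : Type*} [PseudoMetricSpace X] [PseudoMetricSpace Y] {η : ℝ≥0 → ℝ≥0}
  {f : X → Y}

lemma dist_le (hf : QuasisymmetricWith η f) {x y z : X} {t : ℝ≥0}
    (h : dist x y ≤ t * dist x z) : dist (f x) (f y) ≤ η t * dist (f x) (f z) := by
  have := hf x y z t (by rw [← NNReal.coe_le_coe]; simpa using h)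
  rwa [← NNReal.coe_le_coe, NNReal.coe_mul, coe_nndist, coe_nndist] at this

lemma dist_lt_inv_mul (hf : QuasisymmetricWith η f) {x y w : X} {v : ℝ≥0} (hv : 0 < v)
    (h : η v * dist (f x) (f w) < dist (f x) (f y)) : dist x w < v⁻¹ * dist x y := by
  by_contra! hle
  have hv' : (0 : ℝ) < v := hv
  have : dist x y ≤ v * dist x w := by
    rwa [NNReal.coe_inv, inv_mul_le_iff₀ hv'] at hle
  exact (hf.dist_le this).not_gt h

lemma mapsTo_ball (hf : QuasisymmetricWith η f) {s : Set X} {z y : X}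
    (hy : ∀ x ∈ s, dist z x ≤ 2 * dist z y) (hD : 0 < dist (f z) (f y)) :
    MapsTo f s (ball (f z) ((η 2 + 1) * dist (f z) (f y))) := by
  intro x hx
  rw [mem_ball, dist_comm]
  calc dist (f z) (f x) ≤ η 2 * dist (f z) (f y) := hf.dist_le (by exact_mod_cast hy x hx)
    _ < (η 2 + 1) * dist (f z) (f y) := by gcongr; exact lt_add_one _

lemma preimage_ball_subset (hf : QuasisymmetricWith η f) {z y : X} {v : ℝ≥0} {t : ℝ}
    (hv : 0 < v) (hvt : η v * t < 1) (hD : 0 < dist (f z) (f y)) :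
    f ⁻¹' ball (f z) (t * dist (f z) (f y)) ⊆ ball z (v⁻¹ * dist z y) := by
  intro w hw
  rw [mem_preimage, mem_ball, dist_comm] at hw
  rw [mem_ball, dist_comm]
  refine hf.dist_lt_inv_mul hv ?_
  calc η v * dist (f z) (f w) ≤ η v * (t * dist (f z) (f y)) := by gcongr
    _ = (η v * t) * dist (f z) (f y) := by ring
    _ < dist (f z) (f y) := mul_lt_of_lt_one_left hD hvt

lemma dist_le_mul_diam [BoundedSpace Y] (hf : QuasisymmetricWith η f) {z y : X} {v : ℝ≥0}
    (hv : 0 < v) (hy : dist z y < diam (univ : Set X) / (1 + 4 / v)) :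
    dist (f z) (f y) ≤ η v * diam (univ : Set Y) := by
  obtain ⟨x₀, -, hx₀⟩ := exists_mem_diam_div_four_le_dist (mem_univ z)
  have hv' : (0 : ℝ) < v := hv
  have hzy : dist z y ≤ v * dist z x₀ := by
    rw [lt_div_iff₀ (by positivity)] at hy
    have : dist z y * (4 / v) ≤ 4 * dist z x₀ := by nlinarith [dist_nonneg (x := z) (y := y)]
    rw [mul_div_assoc', div_le_iff₀ hv'] at this
    linarith
  calc dist (f z) (f y) ≤ η v * dist (f z) (f x₀) := hf.dist_le hzy
    _ ≤ η v * diam (univ : Set Y) := by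
      gcongr; exact dist_le_diam_of_mem (Bornology.isBounded_univ.2 ‹_›) (mem_univ _) (mem_univ _)

end QuasisymmetricWith

lemma QuasisymmetricWith.ball_subset_singleton_or_exists_preimage_ball
    {X Y : Type*} [MetricSpace X] [MetricSpace Y] [BoundedSpace Y] {η : ℝ≥0 → ℝ≥0} {f : X → Y}
    (hf : QuasisymmetricWith η f) (hinj : Function.Injective f) {lam : ℝ} (hlam : 0 ≤ lam)
    {v : ℝ≥0} (hv : 0 < v) (hηv : η v * (lam * (η 2 + 1)) < 1) {z : X} {r : ℝ} (hr : 0 < r)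
    (hrlt : r < diam (univ : Set X) / (1 + 4 / v)) :
    ball z r ⊆ {z} ∨ ∃ ρ, 0 < ρ ∧ lam * ρ < diam (univ : Set Y) ∧
      ball z r ⊆ f ⁻¹' ball (f z) ρ ∧ f ⁻¹' ball (f z) (lam * ρ) ⊆ ball z ((1 + 4 / v) * r) := by
  obtain ⟨x₁, hx₁, hmax⟩ := exists_mem_forall_dist_le_two_mul isBounded_ball (nonempty_ball.2 hr) z
  rcases eq_or_ne x₁ z with rfl | hne
  · exact .inl fun x hx => by simpa [eq_comm] using hmax x hx
  have hD : 0 < dist (f z) (f x₁) := dist_pos.2 (hinj.ne hne).symm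
  have hx₁r : dist z x₁ < r := mem_ball'.1 hx₁
  have hsmall := hf.dist_le_mul_diam hv (hx₁r.trans hrlt)
  have hdiam : 0 < diam (univ : Set Y) := pos_of_mul_pos_right (hD.trans_le hsmall) (η v).2
  refine .inr ⟨(η 2 + 1) * dist (f z) (f x₁), by positivity, ?_,
    (hf.mapsTo_ball hmax hD).subset_preimage, ?_⟩
  · calc lam * ((η 2 + 1) * dist (f z) (f x₁))
        ≤ lam * (η 2 + 1) * (η v * diam (univ : Set Y)) := by rw [← mul_assoc]; gcongr
      _ = (η v * (lam * (η 2 + 1))) * diam (univ : Set Y) := by ring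
      _ < diam (univ : Set Y) := mul_lt_of_lt_one_left hdiam hηv
  · calc f ⁻¹' ball (f z) (lam * ((η 2 + 1) * dist (f z) (f x₁)))
        = f ⁻¹' ball (f z) (lam * (η 2 + 1) * dist (f z) (f x₁)) := by rw [mul_assoc]
      _ ⊆ ball z (v⁻¹ * dist z x₁) := hf.preimage_ball_subset hv hηv hD
      _ ⊆ ball z ((1 + 4 / v) * r) := ball_subset_ball <| by
        rw [NNReal.coe_inv]
        gcongr
        calc (v : ℝ)⁻¹ ≤ 4 / v := by rw [inv_eq_one_div]; gcongr; norm_num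
          _ ≤ 1 + 4 / v := le_add_of_nonneg_left zero_le_one

theorem linLocContractible_of_quasisymmetric_general
    {X Y : Type*} [MetricSpace X] [MetricSpace Y] [CompactSpace Y]
    (f : X ≃ₜ Y) (η : NNReal ≃ₜ NNReal)
    (hqs : ∀ (x y z : X) (t : NNReal), nndist x y ≤ t * nndist x z →
      nndist (f x) (f y) ≤ η t * nndist (f x) (f z))
    (lam : ℝ) (hlam : 1 ≤ lam) (hllc : LinLocContractible Y lam) :
    ∃ lam' : ℝ, 1 ≤ lam' ∧ LinLocContractible X lam' := by
  have hf : QuasisymmetricWith η f := hqs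
  obtain ⟨v, hv, hηv⟩ :=
    homeomorph_nnreal_exists_pos_apply_mul_lt_one η (c := lam * (η 2 + 1)) (by positivity)
  refine ⟨1 + 4 / v, le_add_of_nonneg_right (by positivity), ?_⟩
  rw [linLocContractible_iff] at hllc ⊢
  intro z r hr hrlt
  rcases hf.ball_subset_singleton_or_exists_preimage_ball f.injective (by positivity) hv hηv hr
    hrlt with hsub | ⟨ρ, hρ, hρlt, hsub, hsub'⟩
  · exact isContractibleIn_of_subset_singleton hsub (mem_ball_self (by positivity))
  · have hcontr := hllc (f z) ρ hρ (by rwa [lt_div_iff₀' (by positivity)])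
    exact (hcontr.preimage f).mono hsub hsub'

/-- Let `X`, `Y` be compact metric spaces, each with at least two
points, and let `f : X → Y` be an `η`-quasisymmetric homeomorphism. If `Y` is linearly
locally contractible with some constant `lam ≥ 1`, then so is `X` (with some constant
`lam' ≥ 1`). -/
theorem linLocContractible_of_quasisymmetric
    {X Y : Type*} [MetricSpace X] [CompactSpace X] [MetricSpace Y] [CompactSpace Y]
    (hX : ∃ a b : X, a ≠ b) (hY : ∃ a b : Y, a ≠ b)
    (f : X ≃ₜ Y) (η : NNReal ≃ₜ NNReal)
    (hqs : ∀ (x y z : X) (t : NNReal), nndist x y ≤ t * nndist x z →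
      nndist (f x) (f y) ≤ η t * nndist (f x) (f z))
    (lam : ℝ) (hlam : 1 ≤ lam) (hllc : LinLocContractible Y lam) :
    ∃ lam' : ℝ, 1 ≤ lam' ∧ LinLocContractible X lam' :=
  linLocContractible_of_quasisymmetric_general f η hqs lam hlam hllc
end

section
/- Let X be a geodesic metric space. Then for every continuous curve γ : [0,1] → X and every δ > 0 there exists a Lipschitz curve β : [0,1] → X with β(0) = γ(0), β(1) = γ(1), and d(γ(t), β(t)) ≤ δ for every t ∈ [0,1]. -/
open Set

private lemma lipschitzOnWith_Icc_glue {X : Type*} [MetricSpace X] {f : ℝ → X} {L : NNReal}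
    {a b c : ℝ} (hab : a ≤ b) (hbc : b ≤ c)
    (h1 : LipschitzOnWith L f (Icc a b)) (h2 : LipschitzOnWith L f (Icc b c)) :
    LipschitzOnWith L f (Icc a c) := by
  rw [lipschitzOnWith_iff_dist_le_mul] at h1 h2 ⊢
  intro s hs t ht
  wlog hst : s ≤ t generalizing s t
  · rw [dist_comm (f s), dist_comm s]
    exact this t ht s hs (le_of_not_ge hst)
  rcases le_total t b with htb | hbt
  · exact h1 s ⟨hs.1, hst.trans htb⟩ t ⟨hs.1.trans hst, htb⟩
  rcases le_total b s with hbs | hsb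
  · exact h2 s ⟨hbs, hst.trans ht.2⟩ t ⟨hbt, ht.2⟩
  calc dist (f s) (f t) ≤ dist (f s) (f b) + dist (f b) (f t) := dist_triangle _ _ _
    _ ≤ L * dist s b + L * dist b t :=
        add_le_add (h1 s ⟨hs.1, hsb⟩ b ⟨hab, le_rfl⟩) (h2 b ⟨le_rfl, hbc⟩ t ⟨hbt, ht.2⟩)
    _ = L * dist s t := by
        rw [Real.dist_eq, Real.dist_eq, Real.dist_eq,
          abs_of_nonpos (by linarith), abs_of_nonpos (by linarith), abs_of_nonpos (by linarith)]
        ring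

/-- Let `X` be a geodesic metric space. Then every continuous curve
`γ : [0,1] → X` can be approximated uniformly, with matching endpoints, by Lipschitz
curves `β : [0,1] → X`. -/
theorem lipschitz_curve_approx_of_geodesic
    {X : Type*} [MetricSpace X]
    (hgeo : ∀ x y : X, ∃ γ : ℝ → X, γ 0 = x ∧ γ (dist x y) = y ∧
      ∀ s ∈ Set.Icc (0 : ℝ) (dist x y), ∀ t ∈ Set.Icc (0 : ℝ) (dist x y),
        dist (γ s) (γ t) = |s - t|) :
    ∀ γ : unitInterval → X, Continuous γ → ∀ δ : ℝ, 0 < δ →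
      ∃ β : unitInterval → X, (∃ L : NNReal, LipschitzWith L β) ∧
        β 0 = γ 0 ∧ β 1 = γ 1 ∧ ∀ t, dist (γ t) (β t) ≤ δ := by
  intro γ hγ δ hδ
  choose σ hσ0 hσ1 hσd using hgeo
  set g : ℝ → X := fun t => γ (Set.projIcc 0 1 zero_le_one t) with hgdef
  have hgu : UniformContinuous g :=
    (CompactSpace.uniformContinuous_of_continuous hγ).comp
      (LipschitzWith.projIcc _).uniformContinuous
  obtain ⟨η, hη, hη2⟩ := Metric.uniformContinuous_iff.mp hgu (δ / 2) (by linarith)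
  obtain ⟨n, hn⟩ := exists_nat_one_div_lt hη
  obtain ⟨N, hN1, hNη⟩ : ∃ N : ℕ, 0 < N ∧ 1 / (N : ℝ) < η :=
    ⟨n + 1, by omega, by push_cast; exact hn⟩
  have hN0 : (0 : ℝ) < N := by exact_mod_cast hN1
  set x : ℤ → X := fun i => g (i / N) with hxdef
  have hdδ : ∀ i : ℤ, dist (x i) (x (i + 1)) ≤ δ / 2 := by
    intro i
    have h1 : dist ((i : ℝ) / N) (((i : ℝ) + 1) / N) = 1 / N := by
      rw [Real.dist_eq, abs_sub_comm]
      have h2 : ((i : ℝ) + 1) / N - (i : ℝ) / N = 1 / N := by ring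
      rw [h2, abs_of_nonneg (by positivity)]
    have h3 := hη2 (a := (i : ℝ) / N) (b := ((i : ℝ) + 1) / N) (by rw [h1]; exact hNη)
    have heq : ((i : ℝ) + 1) / N = ((i + 1 : ℤ) : ℝ) / N := by push_cast; ring
    rw [heq] at h3
    rw [hxdef]
    exact le_of_lt h3
  set c : ℝ → X :=
    fun t => σ (x ⌊t * N⌋) (x (⌊t * N⌋ + 1))
      ((t * N - ⌊t * N⌋) * dist (x ⌊t * N⌋) (x (⌊t * N⌋ + 1))) with hcdef
  have hA : ∀ i : ℤ, ∀ t ∈ Icc ((i : ℝ) / N) (((i : ℝ) + 1) / N),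
      c t = σ (x i) (x (i + 1)) ((t * N - i) * dist (x i) (x (i + 1))) := by
    intro i t ht
    rcases eq_or_lt_of_le ht.2 with heq | hlt
    · have h1 : t * N = (i : ℝ) + 1 := by
        rw [heq, div_mul_cancel₀ _ hN0.ne']
      have h2 : ⌊t * N⌋ = i + 1 := by
        rw [h1]
        norm_cast
        exact Int.floor_intCast _
      have h3 : (t * (N : ℝ) - ((i + 1 : ℤ) : ℝ)) * dist (x (i + 1)) (x (i + 1 + 1)) = 0 := by
        have hc : ((i + 1 : ℤ) : ℝ) = (i : ℝ) + 1 := by push_cast; ring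
        rw [hc, h1]; ring
      have h4 : (t * (N : ℝ) - i) * dist (x i) (x (i + 1)) = dist (x i) (x (i + 1)) := by
        rw [h1]; ring
      rw [hcdef]
      simp only [h2]
      rw [h3, hσ0, h4, hσ1]
    · have hlo : (i : ℝ) ≤ t * N := (div_le_iff₀ hN0).mp ht.1
      have hhi : t * N < (i : ℝ) + 1 := (lt_div_iff₀ hN0).mp hlt
      have h2 : ⌊t * N⌋ = i := by
        rw [Int.floor_eq_iff]
        · exact ⟨hlo, by push_cast; exact hhi⟩
      rw [hcdef]
      simp only [h2]
  have hfrac : ∀ i : ℤ, ∀ t ∈ Icc ((i : ℝ) / N) (((i : ℝ) + 1) / N),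
      0 ≤ t * N - i ∧ t * N - i ≤ 1 := by
    intro i t ht
    have h1 := (div_le_iff₀ hN0).mp ht.1
    have h2 := (le_div_iff₀ hN0).mp ht.2
    constructor <;> linarith
  set L : NNReal := Real.toNNReal ((N : ℝ) * (δ / 2)) with hLdef
  have hLcoe : (L : ℝ) = (N : ℝ) * (δ / 2) := Real.coe_toNNReal _ (by positivity)
  have hC : ∀ i : ℤ, LipschitzOnWith L c (Icc ((i : ℝ) / N) (((i : ℝ) + 1) / N)) := by
    intro i
    apply LipschitzOnWith.of_dist_le_mul
    intro s hs t ht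
    rw [hA i s hs, hA i t ht]
    obtain ⟨hs0, hs1⟩ := hfrac i s hs
    obtain ⟨ht0, ht1⟩ := hfrac i t ht
    have hD0 : (0 : ℝ) ≤ dist (x i) (x (i + 1)) := dist_nonneg
    have ms : (s * N - i) * dist (x i) (x (i + 1)) ∈ Icc (0 : ℝ) (dist (x i) (x (i + 1))) :=
      ⟨mul_nonneg hs0 hD0, by nlinarith⟩
    have mt : (t * N - i) * dist (x i) (x (i + 1)) ∈ Icc (0 : ℝ) (dist (x i) (x (i + 1))) :=
      ⟨mul_nonneg ht0 hD0, by nlinarith⟩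
    rw [hσd _ _ _ ms _ mt, hLcoe, Real.dist_eq]
    have h3 : (s * N - i) * dist (x i) (x (i + 1)) - (t * N - i) * dist (x i) (x (i + 1))
        = (s - t) * N * dist (x i) (x (i + 1)) := by ring
    rw [h3, abs_mul, abs_mul, abs_of_nonneg hN0.le, abs_of_nonneg hD0]
    nlinarith [abs_nonneg (s - t), hdδ i, mul_nonneg (abs_nonneg (s - t)) hN0.le]
  have hInd : ∀ k : ℕ, LipschitzOnWith L c (Icc 0 ((k : ℝ) / N)) := by
    intro k
    induction k with
    | zero =>
        apply (hC 0).mono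
        intro y hy
        simp only [Nat.cast_zero, zero_div, mem_Icc] at hy
        have hy0 : y = 0 := le_antisymm hy.2 hy.1
        subst hy0
        constructor
        · norm_num
        · positivity
    | succ m ih =>
        have h2 : LipschitzOnWith L c (Icc ((m : ℝ) / N) (((m : ℝ) + 1) / N)) := by
          have h3 := hC (m : ℤ)
          push_cast at h3
          exact h3
        have hglue := lipschitzOnWith_Icc_glue (by positivity)
          (by gcongr <;> linarith) ih h2
        have h4 : ((m + 1 : ℕ) : ℝ) = (m : ℝ) + 1 := by push_cast; ring
        rw [h4]
        exact hglue
  have hL01 : LipschitzOnWith L c (Icc 0 1) := by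
    have h1 := hInd N
    rw [div_self hN0.ne'] at h1
    exact h1
  have hgmem : ∀ t : unitInterval, g (t : ℝ) = γ t := by
    intro t
    rw [hgdef]
    simp only
    congr 1
    rw [Set.projIcc_of_mem zero_le_one t.2]
  refine ⟨fun t => c t, ⟨L, ?_⟩, ?_, ?_, ?_⟩
  · apply LipschitzWith.of_dist_le_mul
    intro s t
    rw [Subtype.dist_eq]
    exact hL01.dist_le_mul s.1 s.2 t.1 t.2
  · -- β 0 = γ 0
    have hmem : (0 : ℝ) ∈ Icc (((0 : ℤ) : ℝ) / N) ((((0 : ℤ) : ℝ) + 1) / N) := by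
      constructor <;> [norm_num; positivity]
    have h1 := hA 0 0 hmem
    have h2 : ((0 : ℝ) * N - ((0 : ℤ) : ℝ)) * dist (x 0) (x (0 + 1)) = 0 := by norm_num
    rw [h2, hσ0] at h1
    show c ((0 : unitInterval) : ℝ) = γ 0
    rw [Set.Icc.coe_zero, h1, hxdef]
    simp only [Int.cast_zero, zero_div]
    exact hgmem 0
  · -- β 1 = γ 1
    have hmem : (1 : ℝ) ∈ Icc (((N : ℤ) : ℝ) / N) ((((N : ℤ) : ℝ) + 1) / N) := by
      constructor
      · push_cast; rw [div_self hN0.ne']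
      · push_cast; rw [le_div_iff₀ hN0]; linarith
    have h1 := hA (N : ℤ) 1 hmem
    have h2 : ((1 : ℝ) * N - ((N : ℤ) : ℝ)) * dist (x N) (x (N + 1)) = 0 := by
      push_cast; ring
    rw [h2, hσ0] at h1
    show c ((1 : unitInterval) : ℝ) = γ 1
    rw [Set.Icc.coe_one, h1, hxdef]
    simp only
    have h3 : ((N : ℤ) : ℝ) / N = (1 : ℝ) := by push_cast; rw [div_self hN0.ne']
    rw [h3]
    exact hgmem 1
  · -- distance bound
    intro t
    set i : ℤ := ⌊(t : ℝ) * N⌋ with hidef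
    have hlo : (i : ℝ) ≤ (t : ℝ) * N := Int.floor_le _
    have hhi : (t : ℝ) * N < (i : ℝ) + 1 := by
      have := Int.lt_floor_add_one ((t : ℝ) * N)
      push_cast at this ⊢
      exact this
    have hmem : (t : ℝ) ∈ Icc ((i : ℝ) / N) (((i : ℝ) + 1) / N) := by
      constructor
      · rw [div_le_iff₀ hN0]; exact hlo
      · rw [le_div_iff₀ hN0]; linarith
    have h1 := hA i (t : ℝ) hmem
    have hD0 : (0 : ℝ) ≤ dist (x i) (x (i + 1)) := dist_nonneg
    obtain ⟨hf0, hf1⟩ := hfrac i (t : ℝ) hmem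
    have ms : ((t : ℝ) * N - i) * dist (x i) (x (i + 1)) ∈
        Icc (0 : ℝ) (dist (x i) (x (i + 1))) :=
      ⟨mul_nonneg hf0 hD0, by nlinarith⟩
    have m0 : (0 : ℝ) ∈ Icc (0 : ℝ) (dist (x i) (x (i + 1))) := ⟨le_rfl, hD0⟩
    have h2 : dist (x i) (c (t : ℝ)) ≤ δ / 2 := by
      rw [h1]
      calc dist (x i) (σ (x i) (x (i + 1)) (((t : ℝ) * N - i) * dist (x i) (x (i + 1))))
          = dist (σ (x i) (x (i + 1)) 0)
              (σ (x i) (x (i + 1)) (((t : ℝ) * N - i) * dist (x i) (x (i + 1)))) := by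
            rw [hσ0]
        _ = |0 - ((t : ℝ) * N - i) * dist (x i) (x (i + 1))| := hσd _ _ _ m0 _ ms
        _ = ((t : ℝ) * N - i) * dist (x i) (x (i + 1)) := by
            rw [zero_sub, abs_neg, abs_of_nonneg (mul_nonneg hf0 hD0)]
        _ ≤ dist (x i) (x (i + 1)) := by nlinarith
        _ ≤ δ / 2 := hdδ i
    have h3 : dist (γ t) (x i) < δ / 2 := by
      rw [← hgmem t, hxdef]
      simp only
      apply hη2
      have h4 : dist ((t : ℝ)) ((i : ℝ) / N) = (t : ℝ) - (i : ℝ) / N := by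
        rw [Real.dist_eq, abs_of_nonneg (by linarith [hmem.1])]
      rw [h4]
      have h5 : (t : ℝ) - (i : ℝ) / N < 1 / N := by
        have he : (t : ℝ) - (i : ℝ) / N = ((t : ℝ) * N - i) / N := by field_simp
        rw [he, div_lt_div_iff₀ hN0 hN0]
        nlinarith
      linarith
    calc dist (γ t) (c (t : ℝ)) ≤ dist (γ t) (x i) + dist (x i) (c (t : ℝ)) :=
          dist_triangle _ _ _
      _ ≤ δ / 2 + δ / 2 := add_le_add h3.le h2
      _ = δ := by ring
end

section
/- Let X be a compact metric space, E a real normed vector space, M ⊆ E a compact subset, U ⊆ E an open set with M ⊆ U, and π : U → M a Lipschitz retraction, i.e., π is Lipschitz and π(p) = p for every p ∈ M. Then every continuous map f : X → M is homotopic, as a map from X to M, to a Lipschitz map g : X → M. -/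
open Metric Set Finset

lemma exists_lipschitz_approx {X : Type*} [MetricSpace X] [CompactSpace X] [Nonempty X]
    {E : Type*} [NormedAddCommGroup E] [NormedSpace ℝ E]
    (f : X → E) (hf : Continuous f) {ε : ℝ} (hε : 0 < ε) :
    ∃ h : X → E, (∃ K : NNReal, LipschitzWith K h) ∧ ∀ x, dist (h x) (f x) ≤ ε := by
  obtain ⟨δ, δpos, hδ⟩ :=
    Metric.uniformContinuous_iff.1 (CompactSpace.uniformContinuous_of_continuous hf) ε hε
  set r : ℝ := δ / 2 with hrdef
  have hrpos : 0 < r := by positivity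
  obtain ⟨t, ht⟩ := isCompact_univ.elim_finite_subcover (fun c : X => Metric.ball c r)
    (fun c => Metric.isOpen_ball) (fun x _ => Set.mem_iUnion.2 ⟨x, Metric.mem_ball_self hrpos⟩)
  set φ : X → X → ℝ := fun c x => max (2 * r - dist x c) 0 with hφ
  set S : X → ℝ := fun x => ∑ c ∈ t, φ c x with hS
  have φnn : ∀ c x, 0 ≤ φ c x := fun c x => le_max_right _ _
  have φle : ∀ c x, φ c x ≤ 2 * r := fun c x =>
    max_le (by linarith [dist_nonneg (x := x) (y := c)]) (by positivity)
  have φlip : ∀ c x y, |φ c x - φ c y| ≤ dist x y := by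
    intro c x y
    refine le_trans (abs_max_sub_max_le_abs _ _ _) ?_
    have e : (2 * r - dist x c) - (2 * r - dist y c) = dist y c - dist x c := by ring
    rw [e]
    exact (abs_dist_sub_le y x c).trans (le_of_eq (dist_comm y x))
  have Slow : ∀ x, r ≤ S x := by
    intro x
    obtain ⟨c, hct, hxc⟩ := Set.mem_iUnion₂.1 (ht (Set.mem_univ x))
    have h1 : r ≤ φ c x := le_trans (by have := Metric.mem_ball.1 hxc; linarith) (le_max_left _ _)
    exact h1.trans (Finset.single_le_sum (fun c _ => φnn c x) hct)
  have Spos : ∀ x, 0 < S x := fun x => lt_of_lt_of_le hrpos (Slow x)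
  set n : ℝ := (t.card : ℝ) with hn
  have hn0 : 0 ≤ n := by positivity
  have Slip : ∀ x y, |S x - S y| ≤ n * dist x y := by
    intro x y
    calc |S x - S y| = |∑ c ∈ t, (φ c x - φ c y)| := by rw [hS, Finset.sum_sub_distrib]
      _ ≤ ∑ c ∈ t, |φ c x - φ c y| := Finset.abs_sum_le_sum_abs _ _
      _ ≤ ∑ _c ∈ t, dist x y := Finset.sum_le_sum fun c _ => φlip c x y
      _ = n * dist x y := by rw [Finset.sum_const, nsmul_eq_mul]
  obtain ⟨x₀, hx₀⟩ := isCompact_univ.exists_isMaxOn Set.univ_nonempty hf.norm.continuousOn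
  obtain ⟨-, hx₀⟩ := hx₀
  set B : ℝ := ‖f x₀‖ with hBdef
  have hB : ∀ x, ‖f x‖ ≤ B := fun x => hx₀ (Set.mem_univ x)
  have hB0 : 0 ≤ B := norm_nonneg _
  set w : X → X → ℝ := fun c x => φ c x / S x with hw
  have wnn : ∀ c x, 0 ≤ w c x := fun c x => div_nonneg (φnn c x) (Spos x).le
  have wsum : ∀ x, ∑ c ∈ t, w c x = 1 := by
    intro x
    rw [hw]
    simp only
    rw [← Finset.sum_div]
    have hx : ∑ c ∈ t, φ c x = S x := rfl
    rw [hx]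
    exact div_self (Spos x).ne'
  have wlip : ∀ c x y, |w c x - w c y| ≤ ((1 + 2 * n) / r) * dist x y := by
    intro c x y
    have hsx := Spos x; have hsy := Spos y
    have key : w c x - w c y = (φ c x * S y - φ c y * S x) / (S x * S y) := by
      rw [hw]; field_simp
    rw [key, abs_div, abs_of_pos (mul_pos hsx hsy)]
    have num : |φ c x * S y - φ c y * S x| ≤ dist x y * S y + (2 * r) * (n * dist x y) := by
      have e : φ c x * S y - φ c y * S x = (φ c x - φ c y) * S y + φ c y * (S y - S x) := by ring
      rw [e]
      calc |(φ c x - φ c y) * S y + φ c y * (S y - S x)|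
          ≤ |(φ c x - φ c y) * S y| + |φ c y * (S y - S x)| := abs_add_le _ _
        _ = |φ c x - φ c y| * S y + φ c y * |S y - S x| := by
            rw [abs_mul, abs_mul, abs_of_pos hsy, abs_of_nonneg (φnn c y)]
        _ ≤ dist x y * S y + (2 * r) * (n * dist x y) := by
            have h2 : |S y - S x| ≤ n * dist x y := by
              rw [dist_comm x y]; exact Slip y x
            gcongr
            · exact φlip c x y
            · exact φle c y
    have d1 : (dist x y * S y) / (S x * S y) ≤ dist x y / r := by
      have e2 : (dist x y * S y) / (S x * S y) = dist x y / S x := by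
        rw [mul_comm (S x) (S y), mul_comm (dist x y) (S y), mul_div_mul_left _ _ hsy.ne']
      rw [e2]
      exact div_le_div_of_nonneg_left dist_nonneg hrpos (Slow x)
    have d2 : ((2 * r) * (n * dist x y)) / (S x * S y) ≤ (2 * n * dist x y) / r := by
      have step : ((2 * r) * (n * dist x y)) / (S x * S y)
          ≤ ((2 * r) * (n * dist x y)) / (r * r) :=
        div_le_div_of_nonneg_left (by positivity) (by positivity)
          (mul_le_mul (Slow x) (Slow y) hrpos.le (Spos x).le)
      refine step.trans (le_of_eq ?_)
      field_simp
    calc |φ c x * S y - φ c y * S x| / (S x * S y)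
        ≤ (dist x y * S y + (2 * r) * (n * dist x y)) / (S x * S y) := by gcongr
      _ = (dist x y * S y) / (S x * S y) + ((2 * r) * (n * dist x y)) / (S x * S y) :=
          add_div _ _ _
      _ ≤ dist x y / r + (2 * n * dist x y) / r := add_le_add d1 d2
      _ = ((1 + 2 * n) / r) * dist x y := by ring
  refine ⟨fun x => ∑ c ∈ t, w c x • f c, ⟨(n * B * ((1 + 2 * n) / r)).toNNReal, ?_⟩, ?_⟩
  · apply LipschitzWith.of_dist_le_mul
    intro x y
    rw [Real.coe_toNNReal _ (by positivity), dist_eq_norm]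
    have e : (∑ c ∈ t, w c x • f c) - (∑ c ∈ t, w c y • f c)
        = ∑ c ∈ t, (w c x - w c y) • f c := by
      rw [← Finset.sum_sub_distrib]
      exact Finset.sum_congr rfl fun c _ => (sub_smul _ _ _).symm
    rw [e]
    calc ‖∑ c ∈ t, (w c x - w c y) • f c‖
        ≤ ∑ c ∈ t, ‖(w c x - w c y) • f c‖ := norm_sum_le _ _
      _ = ∑ c ∈ t, |w c x - w c y| * ‖f c‖ := by
          simp [norm_smul, Real.norm_eq_abs]
      _ ≤ ∑ _c ∈ t, (((1 + 2 * n) / r) * dist x y) * B :=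
          Finset.sum_le_sum fun c _ =>
            mul_le_mul (wlip c x y) (hB c) (norm_nonneg _) (by positivity)
      _ = n * ((((1 + 2 * n) / r) * dist x y) * B) := by
          rw [Finset.sum_const, nsmul_eq_mul]
      _ = n * B * ((1 + 2 * n) / r) * dist x y := by ring
  · intro x
    have e : (∑ c ∈ t, w c x • f c) - f x = ∑ c ∈ t, w c x • (f c - f x) := by
      simp only [smul_sub, Finset.sum_sub_distrib, ← Finset.sum_smul, wsum x, one_smul]
    rw [dist_eq_norm, e]
    calc ‖∑ c ∈ t, w c x • (f c - f x)‖
        ≤ ∑ c ∈ t, ‖w c x • (f c - f x)‖ := norm_sum_le _ _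
      _ = ∑ c ∈ t, w c x * ‖f c - f x‖ := by
          simp only [norm_smul, Real.norm_eq_abs]
          exact Finset.sum_congr rfl fun c _ => by rw [abs_of_nonneg (wnn c x)]
      _ ≤ ∑ c ∈ t, w c x * ε := by
          refine Finset.sum_le_sum fun c _ => ?_
          rcases eq_or_lt_of_le (wnn c x) with h0 | hpos
          · rw [← h0]; simp
          · have hφpos : 0 < φ c x := by
              by_contra hcon
              push_neg at hcon
              have : φ c x = 0 := le_antisymm hcon (φnn c x)
              rw [hw] at hpos
              simp only [this, zero_div] at hpos
              exact lt_irrefl _ hpos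
            have hdxc : dist x c < 2 * r := by
              by_contra hcon
              push_neg at hcon
              have : φ c x = 0 := by
                rw [hφ]; simp only; exact max_eq_right (by linarith)
              linarith
            have : dist x c < δ := by rw [hrdef] at hdxc; linarith
            have hfe : dist (f x) (f c) < ε := hδ this
            have : ‖f c - f x‖ ≤ ε := by
              rw [← dist_eq_norm, dist_comm]
              exact hfe.le
            exact mul_le_mul_of_nonneg_left this (wnn c x)
      _ = ε := by rw [← Finset.sum_mul, wsum, one_mul]

/-- Let `X` be a compact metric space, `M ⊆ E` a compact subset of a
real normed vector space, `U ⊇ M` open, and `retr : U → M` a Lipschitz retraction. Then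
every continuous map `f : X → M` is homotopic, as a map from `X` to `M`, to a Lipschitz
map `g : X → M`. -/
theorem continuous_map_into_retract_homotopic_to_lipschitz
    {X : Type*} [MetricSpace X] [CompactSpace X]
    {E : Type*} [NormedAddCommGroup E] [NormedSpace ℝ E]
    (M U : Set E) (hM : IsCompact M) (hU : IsOpen U) (hMU : M ⊆ U)
    (retr : E → E) (L : NNReal) (hretrLip : LipschitzOnWith L retr U)
    (hretrM : ∀ u ∈ U, retr u ∈ M) (hretr : ∀ p ∈ M, retr p = p)
    (f : X → E) (hf : Continuous f) (hfM : ∀ x, f x ∈ M) :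
    ∃ g : X → E, (∃ K : NNReal, LipschitzWith K g) ∧ (∀ x, g x ∈ M) ∧
      ∃ H : unitInterval × X → E, Continuous H ∧ (∀ p, H p ∈ M) ∧
        (∀ x, H (0, x) = f x) ∧ (∀ x, H (1, x) = g x) := by
  rcases isEmpty_or_nonempty X with hX | hX
  · exact ⟨f, ⟨1, fun x y => isEmptyElim x⟩, hfM,
      fun p => f p.2, hf.comp continuous_snd, fun p => hfM p.2, fun x => rfl, fun x => rfl⟩
  obtain ⟨δ, δpos, hδU⟩ := hM.exists_thickening_subset_open hU hMU
  obtain ⟨h, ⟨K, hK⟩, hclose⟩ := exists_lipschitz_approx f hf (half_pos δpos)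
  -- every point on the segment from f x to h x lies in U
  have hseg : ∀ (s : ℝ), 0 ≤ s → s ≤ 1 → ∀ x, (1 - s) • f x + s • h x ∈ U := by
    intro s hs0 hs1 x
    apply hδU
    rw [Metric.mem_thickening_iff]
    refine ⟨f x, hfM x, ?_⟩
    have e : ((1 - s) • f x + s • h x) - f x = s • (h x - f x) := by
      rw [smul_sub, sub_smul, one_smul]; abel
    rw [dist_eq_norm, e, norm_smul, Real.norm_eq_abs, abs_of_nonneg hs0]
    calc s * ‖h x - f x‖ ≤ 1 * ‖h x - f x‖ :=
          mul_le_mul_of_nonneg_right hs1 (norm_nonneg _)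
      _ = dist (h x) (f x) := by rw [one_mul, dist_eq_norm]
      _ ≤ δ / 2 := hclose x
      _ < δ := half_lt_self δpos
  have hhU : ∀ x, h x ∈ U := by
    intro x
    have := hseg 1 zero_le_one le_rfl x
    simpa using this
  refine ⟨retr ∘ h, ⟨L * K, ?_⟩, fun x => hretrM _ (hhU x),
    fun p => retr ((1 - (p.1 : ℝ)) • f p.2 + (p.1 : ℝ) • h p.2), ?_, ?_, ?_, ?_⟩
  · intro x y
    calc edist ((retr ∘ h) x) ((retr ∘ h) y) ≤ L * edist (h x) (h y) :=
          hretrLip (hhU x) (hhU y)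
      _ ≤ L * (K * edist x y) := by gcongr; exact hK x y
      _ = ↑(L * K) * edist x y := by rw [ENNReal.coe_mul, mul_assoc]
  · apply hretrLip.continuousOn.comp_continuous
    · apply Continuous.add
      · exact ((continuous_const.sub (continuous_subtype_val.comp continuous_fst)).smul
          (hf.comp continuous_snd))
      · exact ((continuous_subtype_val.comp continuous_fst).smul
          (hK.continuous.comp continuous_snd))
    · exact fun p => hseg p.1 p.1.2.1 p.1.2.2 p.2
  · exact fun p => hretrM _ (hseg p.1 p.1.2.1 p.1.2.2 p.2)
  · intro x
    simp only [Set.Icc.coe_zero, sub_zero, one_smul, zero_smul, add_zero]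
    exact hretr _ (hfM x)
  · intro x
    simp only [Set.Icc.coe_one, sub_self, zero_smul, one_smul, zero_add, Function.comp_apply]
end
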